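/- For a projective partition p ∈ C(k,k) in a category of partitions C with t(p) > 0 and through-block decomposition p = p_u* p_u, the set Sym(p) = {σ ∈ S_{t(p)} : p_u* r_σ p_u ∈ C} is a subgroup of the symmetric group S_{t(p)}. -/

import Mathlib

/-- A two-row partition with `k` upper and `l` lower points, encoded as the
equivalence relation whose classes are the blocks. -/
abbrev PP (k l : ℕ) := Setoid (Fin k ⊕ Fin l)

/-- The involution `p*` (turning `p` upside down). -/
def swapP {k l : ℕ} (p : PP k l) : PP l k := Setoid.comap Sum.swap p

/-- Disjoint union of two setoids. -/
def sumSetoid {α β : Type*} (s : Setoid α) (t : Setoid β) : Setoid (α ⊕ β) where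
  r := Sum.LiftRel s.r t.r
  iseqv := by
    refine ⟨fun x => ?_, fun {x y} h => ?_, fun {x y z} h1 h2 => ?_⟩
    · cases x with
      | inl a => exact Sum.LiftRel.inl (s.iseqv.refl a)
      | inr b => exact Sum.LiftRel.inr (t.iseqv.refl b)
    · cases h with
      | inl h => exact Sum.LiftRel.inl (s.iseqv.symm h)
      | inr h => exact Sum.LiftRel.inr (t.iseqv.symm h)
    · cases h1 with
      | inl h1 =>
        cases h2 with
        | inl h2 => exact Sum.LiftRel.inl (s.iseqv.trans h1 h2)
      | inr h1 =>
        cases h2 with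
        | inr h2 => exact Sum.LiftRel.inr (t.iseqv.trans h1 h2)

/-- Reindexing equivalence for the horizontal concatenation (tensor product). -/
def tensorEquiv (k l k' l' : ℕ) :
    (Fin (k + k') ⊕ Fin (l + l')) ≃ ((Fin k ⊕ Fin l) ⊕ (Fin k' ⊕ Fin l')) :=
  (Equiv.sumCongr finSumFinEquiv.symm finSumFinEquiv.symm).trans
    (Equiv.sumSumSumComm (Fin k) (Fin k') (Fin l) (Fin l'))

/-- Tensor product (horizontal concatenation) of partitions. -/
def tensorP {k l k' l' : ℕ} (p : PP k l) (q : PP k' l') : PP (k + k') (l + l') :=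
  Setoid.comap (tensorEquiv k l k' l') (sumSetoid p q)

/-- The relation on `k ⊔ l ⊔ m` points generated by `p` (upper part) and `q` (lower part). -/
def midRel {k l m : ℕ} (p : PP k l) (q : PP l m) :
    (Fin k ⊕ (Fin l ⊕ Fin m)) → (Fin k ⊕ (Fin l ⊕ Fin m)) → Prop := fun x y =>
  (∃ a b : Fin k ⊕ Fin l, p.r a b ∧ x = Sum.map id Sum.inl a ∧ y = Sum.map id Sum.inl b) ∨
  (∃ a b : Fin l ⊕ Fin m, q.r a b ∧ x = Sum.inr a ∧ y = Sum.inr b)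

/-- The equivalence relation generated on `k ⊔ l ⊔ m` in the composition procedure. -/
def bigS {k l m : ℕ} (p : PP k l) (q : PP l m) : Setoid (Fin k ⊕ (Fin l ⊕ Fin m)) :=
  Relation.EqvGen.setoid (midRel p q)

/-- `compP q p` is the vertical composition `qp` (apply `p : P(k,l)` first, then `q : P(l,m)`). -/
def compP {k l m : ℕ} (q : PP l m) (p : PP k l) : PP k m :=
  Setoid.comap (Sum.map id Sum.inr) (bigS p q)

/-- `rlP q p` : the number of closed loops removed in the composition `qp`,
i.e. the blocks of the generated relation consisting only of middle points. -/
noncomputable def rlP {k l m : ℕ} (q : PP l m) (p : PP k l) : ℕ :=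
  Nat.card {c : Quotient (bigS p q) //
    ∀ x, Quotient.mk (bigS p q) x = c → ∃ b : Fin l, x = Sum.inr (Sum.inl b)}

/-- `b(p)` : number of blocks. -/
noncomputable def bP {k l : ℕ} (p : PP k l) : ℕ := Nat.card (Quotient p)

/-- `t(p)` : number of through-blocks (blocks meeting both rows). -/
noncomputable def tP {k l : ℕ} (p : PP k l) : ℕ :=
  Nat.card {c : Quotient p // (∃ a : Fin k, Quotient.mk p (Sum.inl a) = c) ∧
    (∃ b : Fin l, Quotient.mk p (Sum.inr b) = c)}

/-- `β(p) = b(p) - t(p)` : number of non-through-blocks. -/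
noncomputable def betaP {k l : ℕ} (p : PP k l) : ℕ := bP p - tP p

/-- The identity partition `|^{⊗k}`. -/
def idP (k : ℕ) : PP k k := Setoid.ker (Sum.elim (fun i : Fin k => i) (fun i : Fin k => i))

/-- A pair partition: all blocks have size two. -/
def isPair {k l : ℕ} (p : PP k l) : Prop := ∀ x, Nat.card {y // p.r x y} = 2

/-- A through-partition: a pair partition each of whose blocks connects exactly one
upper point to exactly one lower point. -/
def isThrough {k : ℕ} (p : PP k k) : Prop :=
  isPair p ∧ (∀ a b : Fin k, p.r (Sum.inl a) (Sum.inl b) → a = b) ∧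
    (∀ a b : Fin k, p.r (Sum.inr a) (Sum.inr b) → a = b)

/-- A building partition. -/
def isBuilding {k l : ℕ} (p : PP k l) : Prop :=
  (∀ b b' : Fin l, p.r (Sum.inr b) (Sum.inr b') → b = b') ∧
  (∀ b : Fin l, ∃ a : Fin k, p.r (Sum.inl a) (Sum.inr b)) ∧
  (∀ b b' : Fin l, ∀ a a' : Fin k, b < b' →
    IsLeast {x : Fin k | p.r (Sum.inl x) (Sum.inr b)} a →
    IsLeast {x : Fin k | p.r (Sum.inl x) (Sum.inr b')} a' → a < a')

/-- A projective partition: symmetric and idempotent. -/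
def isProjective {k : ℕ} (p : PP k k) : Prop := swapP p = p ∧ compP p p = p

/-- Linear position of the points, reading the upper row left to right and then the
lower row right to left. -/
def posP (k l : ℕ) : Fin k ⊕ Fin l → ℕ :=
  Sum.elim (fun i => (i : ℕ)) (fun j => k + (l - 1 - (j : ℕ)))

/-- Noncrossing partitions. -/
def isNC {k l : ℕ} (p : PP k l) : Prop :=
  ¬ ∃ x1 x2 x3 x4 : Fin k ⊕ Fin l,
    posP k l x1 < posP k l x2 ∧ posP k l x2 < posP k l x3 ∧ posP k l x3 < posP k l x4 ∧
    p.r x1 x3 ∧ p.r x2 x4 ∧ ¬ p.r x1 x2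

/-- Rotation of the leftmost upper point to the lower-left position: reindexing equivalence. -/
def rotEquivL (k l : ℕ) : (Fin k ⊕ Fin (l + 1)) ≃ (Fin (k + 1) ⊕ Fin l) :=
  (Equiv.sumCongr (Equiv.refl (Fin k))
      ((finCongr (Nat.add_comm l 1)).trans finSumFinEquiv.symm)).trans <|
    ((Equiv.sumAssoc (Fin k) (Fin 1) (Fin l)).symm).trans <|
      (Equiv.sumCongr (Equiv.sumComm (Fin k) (Fin 1)) (Equiv.refl (Fin l))).trans <|
        (Equiv.sumCongr finSumFinEquiv (Equiv.refl (Fin l))).trans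
          (Equiv.sumCongr (finCongr (Nat.add_comm 1 k)) (Equiv.refl (Fin l)))

/-- Rotation of the rightmost upper point to the lower-right position: reindexing equivalence. -/
def rotEquivR (k l : ℕ) : (Fin k ⊕ Fin (l + 1)) ≃ (Fin (k + 1) ⊕ Fin l) :=
  (Equiv.sumCongr (Equiv.refl (Fin k)) finSumFinEquiv.symm).trans <|
    (Equiv.sumCongr (Equiv.refl (Fin k)) (Equiv.sumComm (Fin l) (Fin 1))).trans <|
      ((Equiv.sumAssoc (Fin k) (Fin 1) (Fin l)).symm).trans
        (Equiv.sumCongr finSumFinEquiv (Equiv.refl (Fin l)))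

/-- A category of partitions: contains the identity partition and is closed under
tensor products, composition, involution and rotations. -/
structure PartitionCategory where
  mem : ∀ k l : ℕ, Set (PP k l)
  id_mem : idP 1 ∈ mem 1 1
  tensor_mem : ∀ {k l k' l' : ℕ} (p : PP k l) (q : PP k' l'),
    p ∈ mem k l → q ∈ mem k' l' → tensorP p q ∈ mem (k + k') (l + l')
  comp_mem : ∀ {k l m : ℕ} (q : PP l m) (p : PP k l),
    q ∈ mem l m → p ∈ mem k l → compP q p ∈ mem k m
  swap_mem : ∀ {k l : ℕ} (p : PP k l), p ∈ mem k l → swapP p ∈ mem l k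
  rotL_mem : ∀ {k l : ℕ} (p : PP (k + 1) l),
    p ∈ mem (k + 1) l → Setoid.comap (rotEquivL k l) p ∈ mem k (l + 1)
  rotL_mem' : ∀ {k l : ℕ} (p : PP k (l + 1)),
    p ∈ mem k (l + 1) → Setoid.comap (rotEquivL k l).symm p ∈ mem (k + 1) l
  rotR_mem : ∀ {k l : ℕ} (p : PP (k + 1) l),
    p ∈ mem (k + 1) l → Setoid.comap (rotEquivR k l) p ∈ mem k (l + 1)
  rotR_mem' : ∀ {k l : ℕ} (p : PP k (l + 1)),
    p ∈ mem k (l + 1) → Setoid.comap (rotEquivR k l).symm p ∈ mem (k + 1) l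

/-- The pair partition `r_σ` associated to a permutation `σ`, connecting the `i`-th
upper point to the `σ(i)`-th lower point. -/
def permP {m : ℕ} (σ : Equiv.Perm (Fin m)) : PP m m :=
  Setoid.ker (Sum.elim (fun i => σ i) (fun i : Fin m => i))


/-!
Composition of partitions is associative, the involution reverses it, and `p_u p_u* = |^{⊗t}`
for a building partition `p_u`. Hence `p_σ p_τ = p_u* r_σ (p_u p_u*) r_τ p_u = p_{στ}`,
`(p_σ)* = p_{σ⁻¹}` and `p_1 = p`, so `Sym(p)` is a subgroup because `C` contains `p` and is
closed under composition and involution.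

For associativity, both bracketings of `r q p` are restrictions of the setoid generated by
`p`, `q` and `r` on four rows of points: restricting a generated setoid to the points that new
blocks are glued onto commutes with the gluing.
-/

namespace Setoid

variable {α β γ : Type*}

theorem gc_map_comap (f : α → β) : GaloisConnection (map · f) (comap f) := fun _ _ =>
  ⟨fun h _ _ hxy => h (le_comap_map hxy),
    fun h => eqvGen_le fun _ _ ⟨_, _, hab, ha, hb⟩ => ha ▸ hb ▸ h hab⟩

theorem map_map (r : Setoid α) (f : α → β) (g : β → γ) : (r.map f).map g = r.map (g ∘ f) :=
  ((gc_map_comap f).compose (gc_map_comap g)).l_unique (gc_map_comap (g ∘ f)) fun _ => rfl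

theorem map_sup (r s : Setoid α) (f : α → β) : (r ⊔ s).map f = r.map f ⊔ s.map f :=
  (gc_map_comap f).l_sup

theorem comap_equiv (e : α ≃ β) (s : Setoid β) : s.comap e = s.map e.symm := by
  refine le_antisymm (fun x y h => Relation.EqvGen.rel _ _ ⟨e x, e y, h, by simp, by simp⟩) ?_
  refine (gc_map_comap _).l_le fun a b h => ?_
  simpa [comap_rel] using h

/-- A path of `s ⊔ t.map e` between points of the range of `e` leaves that range only
along `s`-steps. -/
theorem comap_sup_map (e : β → α) (s : Setoid α) (t : Setoid β) :
    (s ⊔ t.map e).comap e = s.comap e ⊔ t := by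
  refine le_antisymm ?_ (sup_le ((gc_map_comap e).monotone_u le_sup_left)
    (((gc_map_comap e).le_u_l t).trans ((gc_map_comap e).monotone_u le_sup_right)))
  let u : Setoid α :=
    { r := fun x y => s x y ∨ ∃ b₁ b₂, s x (e b₁) ∧ (s.comap e ⊔ t) b₁ b₂ ∧ s (e b₂) y
      iseqv := by
        refine ⟨fun x => .inl (s.refl' x), ?_, ?_⟩
        · rintro x y (h | ⟨b₁, b₂, h₁, h₂, h₃⟩)
          · exact .inl (s.symm' h)
          · exact .inr ⟨b₂, b₁, s.symm' h₃, symm' _ h₂, s.symm' h₁⟩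
        · rintro x y z (h | ⟨b₁, b₂, h₁, h₂, h₃⟩) (h' | ⟨b₃, b₄, h₄, h₅, h₆⟩)
          · exact .inl (s.trans' h h')
          · exact .inr ⟨b₃, b₄, s.trans' h h₄, h₅, h₆⟩
          · exact .inr ⟨b₁, b₂, h₁, h₂, s.trans' h₃ h'⟩
          · have h₂₃ : (s.comap e ⊔ t) b₂ b₃ := le_sup_left (a := s.comap e) (s.trans' h₃ h₄)
            exact .inr ⟨b₁, b₄, h₁, trans' _ (trans' _ h₂ h₂₃) h₅, h₆⟩ }
  have hu : s ⊔ t.map e ≤ u := sup_le (fun _ _ h => .inl h) ((gc_map_comap e).l_le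
    fun b₁ b₂ h => .inr ⟨b₁, b₂, s.refl' _, le_sup_right (a := s.comap e) h, s.refl' _⟩)
  rintro b₁ b₂ h
  rcases hu h with h | ⟨b₃, b₄, h₁, h₂, h₃⟩
  · exact le_sup_left (a := s.comap e) h
  · have hs : s.comap e ≤ s.comap e ⊔ t := le_sup_left
    exact trans' _ (trans' _ (hs h₁) h₂) (hs h₃)

theorem comap_map_of_isPullback {X Y W A : Type*} {w : X → W} {e : Y → W} {i : A → X}
    {j : A → Y} (hw : Function.Injective w) (he : Function.Injective e) (hcomm : w ∘ i = e ∘ j)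
    (hpb : ∀ x y, w x = e y → ∃ a, i a = x ∧ j a = y) (s : Setoid X) :
    (s.map w).comap e = (s.comap i).map j := by
  refine le_antisymm (fun y₁ y₂ h => ?_) ?_
  · have hker : ker w ≤ s := ker_eq_bot_iff.2 hw ▸ bot_le
    have h' : (Relation.Map s w w ⊔ (· = ·)) (e y₁) (e y₂) := coe_map_of_ker_le s w hker ▸ h
    rcases h' with ⟨x₁, x₂, hx, h₁, h₂⟩ | h
    · obtain ⟨a₁, rfl, rfl⟩ := hpb _ _ h₁
      obtain ⟨a₂, rfl, rfl⟩ := hpb _ _ h₂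
      exact Relation.EqvGen.rel _ _ ⟨a₁, a₂, hx, rfl, rfl⟩
    · exact he h ▸ refl' _ _
  · rw [gc_map_comap j, ← comap_comp _ e j, ← hcomm, comap_comp]
    exact (gc_map_comap i).monotone_u le_comap_map

theorem eq_comap_of_rel_section {Z : Type*} {b : Setoid α} {t : Setoid Z} (ρ : α → Z) (s : Z → α)
    (hle : b ≤ t.comap ρ) (hsec : ∀ x, b x (s (ρ x))) (ht : t ≤ b.comap s) : b = t.comap ρ :=
  le_antisymm hle fun x y h => b.trans' (hsec x) (b.trans' (ht h) (b.symm' (hsec y)))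

end Setoid

section Partitions

variable {k l m n t : ℕ}

theorem bigS_eq_sup (p : PP k l) (q : PP l m) :
    bigS p q = p.map (Sum.map id Sum.inl) ⊔ q.map Sum.inr := by
  refine le_antisymm (Setoid.eqvGen_le ?_) (sup_le ?_ ?_)
  · rintro _ _ (⟨a, b, h, rfl, rfl⟩ | ⟨a, b, h, rfl, rfl⟩)
    · exact le_sup_left (b := q.map Sum.inr) (Setoid.le_comap_map h)
    · exact le_sup_right (a := p.map (Sum.map id Sum.inl)) (Setoid.le_comap_map h)
  · exact (Setoid.gc_map_comap _ _ _).2 fun a b h => .rel _ _ (.inl ⟨a, b, h, rfl, rfl⟩)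
  · exact (Setoid.gc_map_comap _ _ _).2 fun a b h => .rel _ _ (.inr ⟨a, b, h, rfl, rfl⟩)

theorem compP_eq_comap_of_section {Z : Type*} {p : PP k l} {q : PP l m} (u : Setoid Z)
    (ρ : Fin k ⊕ (Fin l ⊕ Fin m) → Z) (s : Z → Fin k ⊕ (Fin l ⊕ Fin m))
    (hp : p ≤ u.comap (ρ ∘ Sum.map id Sum.inl)) (hq : q ≤ u.comap (ρ ∘ Sum.inr))
    (hsec : ∀ x, bigS p q x (s (ρ x))) (hu : u ≤ (bigS p q).comap s) :
    compP q p = u.comap (ρ ∘ Sum.map id Sum.inr) := by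
  have hle : bigS p q ≤ u.comap ρ := by
    rw [bigS_eq_sup]
    exact sup_le ((Setoid.gc_map_comap _ _ _).2 hp) ((Setoid.gc_map_comap _ _ _).2 hq)
  rw [compP, Setoid.eq_comap_of_rel_section ρ s hle hsec hu, Setoid.comap_comp]

theorem compP_idP_left (p : PP k l) : compP (idP l) p = p := by
  rw [compP_eq_comap_of_section (q := idP l) p (Sum.map id (Sum.elim id id)) (Sum.map id Sum.inl)
    (by rintro (a | b) (a' | b') h <;> exact h)
    (by rintro (b | b) (b' | b') (rfl : b = b') <;> exact p.refl' _)
    (by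
      rintro (a | b | b)
      · exact Relation.EqvGen.refl _
      · exact Relation.EqvGen.refl _
      · exact .rel _ _ (.inr ⟨.inr b, .inl b, rfl, rfl, rfl⟩))
    (fun a b h => .rel _ _ (.inl ⟨a, b, h, rfl, rfl⟩))]
  ext x y
  rcases x with _ | _ <;> rcases y with _ | _ <;> rfl

theorem permP_one : permP (1 : Equiv.Perm (Fin t)) = idP t := rfl

theorem permP_mul (σ τ : Equiv.Perm (Fin t)) :
    compP (permP σ) (permP τ) = permP (σ * τ) := by
  rw [compP_eq_comap_of_section (p := permP τ) (q := permP σ) ⊥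
    (Sum.elim (fun i => σ (τ i)) (Sum.elim (fun j => σ j) id)) (fun i => .inr (.inr i))
    (by rintro (i | j) (i' | j') h <;> exact congrArg σ h)
    (by rintro (j | i) (j' | i') h <;> exact h)
    (by
      rintro (i | j | i)
      · exact .trans _ (.inr (.inl (τ i))) _ (.rel _ _ (.inl ⟨.inl i, .inr (τ i), rfl, rfl, rfl⟩))
          (.rel _ _ (.inr ⟨.inl (τ i), .inr (σ (τ i)), rfl, rfl, rfl⟩))
      · exact .rel _ _ (.inr ⟨.inl j, .inr (σ j), rfl, rfl, rfl⟩)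
      · exact Relation.EqvGen.refl _)
    bot_le]
  ext x y
  rcases x with _ | _ <;> rcases y with _ | _ <;> rfl

theorem compP_swapP_self {pu : PP k t}
    (hinj : ∀ b b' : Fin t, pu.r (Sum.inr b) (Sum.inr b') → b = b')
    (hsurj : ∀ b : Fin t, ∃ a : Fin k, pu.r (Sum.inl a) (Sum.inr b)) :
    compP pu (swapP pu) = idP t := by
  rw [compP_eq_comap_of_section (p := swapP pu) (q := pu) pu (Sum.elim Sum.inr id) Sum.inr
    (by rintro (b | a) (b' | a') h <;> exact h) (fun _ _ h => h)
    (by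
      rintro (b | a | b)
      · obtain ⟨a, ha⟩ := hsurj b
        exact .trans _ (.inr (.inl a)) _ (.rel _ _ (.inl ⟨.inl b, .inr a, pu.symm' ha, rfl, rfl⟩))
          (.rel _ _ (.inr ⟨.inl a, .inr b, ha, rfl, rfl⟩))
      · exact Relation.EqvGen.refl _
      · exact Relation.EqvGen.refl _)
    (fun x y h => .rel _ _ (.inr ⟨x, y, h, rfl, rfl⟩))]
  ext x y
  rcases x with b | b <;> rcases y with b' | b' <;>
    exact ⟨hinj b b', fun (hb : b = b') => hb ▸ pu.refl' _⟩

theorem swapP_eq_map (p : PP k l) : swapP p = p.map Sum.swap :=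
  Setoid.comap_equiv (Equiv.sumComm _ _) p

theorem swapP_swapP (p : PP k l) : swapP (swapP p) = p := by
  rw [swapP, swapP, ← Setoid.comap_comp, Sum.swap_swap_eq, Setoid.comap_id]

theorem swapP_permP (σ : Equiv.Perm (Fin t)) : swapP (permP σ) = permP σ⁻¹ := by
  ext x y
  change Sum.elim (fun i => σ i) id x.swap = Sum.elim (fun i => σ i) id y.swap ↔
    Sum.elim (fun i => σ⁻¹ i) id x = Sum.elim (fun i => σ⁻¹ i) id y
  rcases x with i | i <;> rcases y with j | j <;>
    simp [Equiv.eq_symm_apply, eq_comm]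

theorem swapP_compP (p : PP k l) (q : PP l m) :
    swapP (compP q p) = compP (swapP p) (swapP q) := by
  let rev : Fin m ⊕ (Fin l ⊕ Fin k) ≃ Fin k ⊕ (Fin l ⊕ Fin m) :=
    ((Equiv.sumComm _ _).trans (Equiv.sumCongr (Equiv.sumComm _ _) (Equiv.refl _))).trans
      (Equiv.sumAssoc _ _ _)
  have hrev : bigS (swapP q) (swapP p) = (bigS p q).comap rev := by
    rw [bigS_eq_sup, bigS_eq_sup, Setoid.comap_equiv, Setoid.map_sup, swapP_eq_map,
      swapP_eq_map, Setoid.map_map, Setoid.map_map, Setoid.map_map, Setoid.map_map, sup_comm]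
    refine congrArg₂ (· ⊔ ·) (congrArg _ ?_) (congrArg _ ?_) <;>
      funext x <;> rcases x with _ | _ <;> rfl
  change ((bigS p q).comap _).comap Sum.swap = (bigS (swapP q) (swapP p)).comap _
  rw [hrev, ← Setoid.comap_comp, ← Setoid.comap_comp]
  refine congrArg (Setoid.comap · _) ?_
  funext x
  rcases x with _ | _ <;> rfl

def bigS₃ (p : PP k l) (q : PP l m) (r : PP m n) :
    Setoid (Fin k ⊕ (Fin l ⊕ (Fin m ⊕ Fin n))) :=
  p.map (Sum.map id Sum.inl) ⊔ q.map (Sum.inr ∘ Sum.map id Sum.inl) ⊔ r.map (Sum.inr ∘ Sum.inr)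

theorem bigS_compP_left (p : PP k l) (q : PP l m) (r : PP m n) :
    bigS (compP q p) r = (bigS₃ p q r).comap (Sum.map id Sum.inr) := by
  have hsplit : bigS₃ p q r = (bigS p q).map (Sum.map id (Sum.map id Sum.inl)) ⊔
      (r.map Sum.inr).map (Sum.map id Sum.inr) := by
    rw [bigS₃, bigS_eq_sup, Setoid.map_sup, Setoid.map_map, Setoid.map_map, Setoid.map_map]
    refine congrArg₂ (· ⊔ ·) (congrArg₂ (· ⊔ ·) (congrArg _ ?_) (congrArg _ ?_))
      (congrArg _ ?_) <;> funext x <;> rcases x with _ | _ <;> rfl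
  rw [hsplit, Setoid.comap_sup_map, Setoid.comap_map_of_isPullback (i := Sum.map id Sum.inr)
    (j := Sum.map id Sum.inl), bigS_eq_sup]
  · rfl
  · exact Sum.map_injective.2
      ⟨Function.injective_id, Sum.map_injective.2 ⟨Function.injective_id, Sum.inl_injective⟩⟩
  · exact Sum.map_injective.2 ⟨Function.injective_id, Sum.inr_injective⟩
  · funext x
    rcases x with _ | _ <;> rfl
  · rintro (_ | _ | _) (_ | _ | _) h <;> cases h
    exacts [⟨.inl _, rfl, rfl⟩, ⟨.inr _, rfl, rfl⟩]

theorem bigS_compP_right (p : PP k l) (q : PP l m) (r : PP m n) :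
    bigS p (compP r q) = (bigS₃ p q r).comap (Sum.map id (Sum.map id Sum.inr)) := by
  have hsplit : bigS₃ p q r = (bigS q r).map Sum.inr ⊔
      (p.map (Sum.map id Sum.inl)).map (Sum.map id (Sum.map id Sum.inr)) := by
    rw [bigS₃, bigS_eq_sup, Setoid.map_sup, Setoid.map_map, Setoid.map_map, Setoid.map_map,
      sup_assoc, sup_comm]
    refine congrArg₂ (· ⊔ ·) (congrArg₂ (· ⊔ ·) (congrArg _ ?_) (congrArg _ ?_))
      (congrArg _ ?_) <;> funext x <;> rcases x with _ | _ <;> rfl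
  rw [hsplit, Setoid.comap_sup_map, Setoid.comap_map_of_isPullback (i := Sum.map id Sum.inr)
    (j := Sum.inr), bigS_eq_sup, sup_comm]
  · rfl
  · exact Sum.inr_injective
  · exact Sum.map_injective.2
      ⟨Function.injective_id, Sum.map_injective.2 ⟨Function.injective_id, Sum.inr_injective⟩⟩
  · funext x
    rcases x with _ | _ <;> rfl
  · rintro (_ | _ | _) (_ | _ | _) h <;> cases h
    exacts [⟨.inl _, rfl, rfl⟩, ⟨.inr _, rfl, rfl⟩]

theorem compP_assoc (p : PP k l) (q : PP l m) (r : PP m n) :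
    compP r (compP q p) = compP (compP r q) p := by
  change (bigS (compP q p) r).comap _ = (bigS p (compP r q)).comap _
  rw [bigS_compP_left, bigS_compP_right, ← Setoid.comap_comp, ← Setoid.comap_comp]
  refine congrArg (Setoid.comap · _) ?_
  funext x
  rcases x with _ | _ <;> rfl

/-- The partition `p_σ = p_u* r_σ p_u` of the paper, for `pu = p_u`. -/
def conjP (pu : PP k t) (σ : Equiv.Perm (Fin t)) : PP k k :=
  compP (swapP pu) (compP (permP σ) pu)

theorem conjP_one (pu : PP k t) : conjP pu 1 = compP (swapP pu) pu := by
  rw [conjP, permP_one, compP_idP_left]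

theorem conjP_mul {pu : PP k t} (hpu : compP pu (swapP pu) = idP t) (σ τ : Equiv.Perm (Fin t)) :
    compP (conjP pu σ) (conjP pu τ) = conjP pu (σ * τ) :=
  calc compP (conjP pu σ) (conjP pu τ)
      = compP (swapP pu) (compP (compP (permP σ) (compP pu (swapP pu))) (compP (permP τ) pu)) := by
        simp only [conjP, compP_assoc]
    _ = compP (swapP pu) (compP (compP (permP σ) (permP τ)) pu) := by
        rw [hpu, ← permP_one, permP_mul, mul_one]
        simp only [compP_assoc]
    _ = conjP pu (σ * τ) := by rw [permP_mul, conjP]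

theorem swapP_conjP (pu : PP k t) (σ : Equiv.Perm (Fin t)) :
    swapP (conjP pu σ) = conjP pu σ⁻¹ := by
  rw [conjP, conjP, swapP_compP, swapP_compP, swapP_swapP, swapP_permP, compP_assoc]

/-- The symmetry group `Sym(p)` of `p = p_u* p_u`. -/
def symSubgroup (C : PartitionCategory) (pu : PP k t) (hpu : compP pu (swapP pu) = idP t)
    (hmem : compP (swapP pu) pu ∈ C.mem k k) : Subgroup (Equiv.Perm (Fin t)) where
  carrier := {σ | conjP pu σ ∈ C.mem k k}
  one_mem' := show conjP pu 1 ∈ C.mem k k from conjP_one pu ▸ hmem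
  mul_mem' {σ τ} hσ hτ :=
    show conjP pu (σ * τ) ∈ C.mem k k from conjP_mul hpu σ τ ▸ C.comp_mem _ _ hσ hτ
  inv_mem' {σ} hσ := show conjP pu σ⁻¹ ∈ C.mem k k from swapP_conjP pu σ ▸ C.swap_mem _ hσ

end Partitions

theorem symmetry_group_is_subgroup_general (C : PartitionCategory) {k : ℕ} (p : PP k k)
    (hmem : p ∈ C.mem k k)
    (pu : PP k (tP p)) (hpu : isBuilding pu) (hdec : p = compP (swapP pu) pu) :
    ∃ H : Subgroup (Equiv.Perm (Fin (tP p))),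
      ∀ σ, σ ∈ H ↔ compP (swapP pu) (compP (permP σ) pu) ∈ C.mem k k :=
  ⟨symSubgroup C pu (compP_swapP_self hpu.1 hpu.2.1) (hdec ▸ hmem), fun _ => Iff.rfl⟩

/-- for a projective partition `p ∈ C(k,k)` with `t(p) > 0` and
through-block decomposition `p = p_u* p_u`, the set
`Sym(p) = {σ : p_u* r_σ p_u ∈ C}` is a subgroup of `S_{t(p)}`. -/
theorem symmetry_group_is_subgroup (C : PartitionCategory) {k : ℕ} (p : PP k k)
    (hmem : p ∈ C.mem k k) (hp : isProjective p) (ht : 0 < tP p)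
    (pu : PP k (tP p)) (hpu : isBuilding pu) (hdec : p = compP (swapP pu) pu) :
    ∃ H : Subgroup (Equiv.Perm (Fin (tP p))),
      ∀ σ, σ ∈ H ↔ compP (swapP pu) (compP (permP σ) pu) ∈ C.mem k k :=
  symmetry_group_is_subgroup_general C p hmem pu hpu hdec
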